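/- Let M = U(h_n)v be a W_n^+-module (1 < n < ∞) free of rank 1 over U(h_n). Then for each i with 1 ≤ i ≤ n, and for every k_i ≥ -1, the element t_i^{k_i} ∂_i · v lies in ℂ[∂_i] v. -/

import Mathlib

/-!
Write `P a m = (t^m ∂_a)·v`. Since `h_n` acts by multiplication, `(t^m ∂_a)·f = P a m · f(∂ - m)`,
so the brackets of `W_n^+` become polynomial identities between the `P a m`. Fix `j ≠ i` and view
everything as polynomials in `∂_j` over the remaining variables. The bracket of `t_j^{-1} ∂_j`
with `t_i^k ∂_i` reads `Q · B_k(X + 1) = B_k · ι_k(Q)`, where `Q = P j (-e_j)`, `B_k = P i (k e_i)`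
and `ι_k` shifts `∂_i` by `-k` in the coefficients. Comparing the two top coefficients gives
`deg B_k · lc Q = ι_k(c) - c` for the subleading coefficient `c` of `Q`. For `k = 1` and `k = -1`
these degrees add up to zero, so `c` is fixed by every `ι_k` and each `B_k` is constant in `∂_j`.
The brackets `[t_l^{-1} ∂_l, t_l ∂_l] = 2 ∂_l` keep all polynomials involved nonzero.
-/

open MvPolynomial

/-- `k ∈ ℤ^n` is an admissible exponent for `t^k ∂_i ∈ W_n^+`. -/
def Admissible {n : ℕ} (i : Fin n) (k : Fin n → ℤ) : Prop :=
  -1 ≤ k i ∧ ∀ j : Fin n, j ≠ i → 0 ≤ k j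

namespace Polynomial
variable {R : Type*} [CommRing R]

theorem nextCoeff_taylor (p : R[X]) (r : R) :
    (taylor r p).nextCoeff = p.nextCoeff + p.natDegree * r * p.leadingCoeff := by
  rcases Nat.eq_zero_or_pos p.natDegree with hd | hd
  · simp [nextCoeff, hd]
  have hdeg : (hasseDeriv (p.natDegree - 1) p).natDegree < 2 :=
    (natDegree_hasseDeriv_le p _).trans_lt (by omega)
  rw [nextCoeff_of_natDegree_pos (by rwa [natDegree_taylor]), natDegree_taylor, taylor_coeff,
    eval_eq_sum_range' hdeg, Finset.sum_range_succ, Finset.sum_range_one,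
    nextCoeff_of_natDegree_pos hd, hasseDeriv_coeff, hasseDeriv_coeff, leadingCoeff,
    show 1 + (p.natDegree - 1) = p.natDegree by omega, zero_add, Nat.choose_self,
    Nat.choose_symm hd, Nat.choose_one_right]
  ring

theorem nextCoeff_mul_of_domain [NoZeroDivisors R] (p q : R[X]) :
    (p * q).nextCoeff = p.leadingCoeff * q.nextCoeff + p.nextCoeff * q.leadingCoeff := by
  simp only [← coeff_one_reverse, ← coeff_zero_reverse, reverse_mul_of_domain, mul_coeff_one]

section TaylorRelation

variable [IsDomain R] {σ : R →+* R} {Q B : R[X]} {r : R}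

theorem leadingCoeff_fixed_of_mul_taylor_eq (hσ : Function.Injective σ) (hB : B ≠ 0)
    (h : Q * taylor r B = B * Q.map σ) : σ Q.leadingCoeff = Q.leadingCoeff := by
  have h' := congrArg leadingCoeff h
  rw [leadingCoeff_mul, leadingCoeff_mul, leadingCoeff_taylor, leadingCoeff_map_of_injective hσ,
    mul_comm] at h'
  exact (mul_left_cancel₀ (leadingCoeff_ne_zero.mpr hB) h').symm

theorem natDegree_mul_leadingCoeff_of_mul_taylor_eq (hσ : Function.Injective σ) (hB : B ≠ 0)
    (h : Q * taylor r B = B * Q.map σ) :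
    B.natDegree * r * Q.leadingCoeff = σ Q.nextCoeff - Q.nextCoeff := by
  have hlead := leadingCoeff_fixed_of_mul_taylor_eq hσ hB h
  have h' := congrArg nextCoeff h
  rw [nextCoeff_mul_of_domain, nextCoeff_mul_of_domain, nextCoeff_taylor, leadingCoeff_taylor,
    nextCoeff_map hσ, leadingCoeff_map_of_injective hσ, hlead] at h'
  refine mul_left_cancel₀ (leadingCoeff_ne_zero.mpr hB) ?_
  linear_combination h'

end TaylorRelation

theorem natDegree_eq_zero_of_mul_taylor_one_eq [IsDomain R] [CharZero R] (ι : ℤ → R →+* R)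
    (hι_add : ∀ a b x, ι a (ι b x) = ι (a + b) x) (hι_zero : ∀ x, ι 0 x = x)
    {Q Bpos Bneg B : R[X]} {k : ℤ} (hQ : Q ≠ 0) (hBpos : Bpos ≠ 0) (hBneg : Bneg ≠ 0)
    (hpos : Q * taylor 1 Bpos = Bpos * Q.map (ι 1))
    (hneg : Q * taylor 1 Bneg = Bneg * Q.map (ι (-1)))
    (hB : Q * taylor 1 B = B * Q.map (ι k)) :
    B.natDegree = 0 := by
  have hinj (a : ℤ) : Function.Injective (ι a) :=
    Function.LeftInverse.injective (g := ι (-a)) fun x => by rw [hι_add, neg_add_cancel, hι_zero]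
  have hq : Q.leadingCoeff ≠ 0 := leadingCoeff_ne_zero.mpr hQ
  set c := Q.nextCoeff
  have hfix_one : ι 1 c = c := by
    have h1 := natDegree_mul_leadingCoeff_of_mul_taylor_eq (hinj 1) hBpos hpos
    have h2 := congrArg (ι 1) (natDegree_mul_leadingCoeff_of_mul_taylor_eq (hinj (-1)) hBneg hneg)
    rw [map_mul, map_mul, map_natCast, map_one, map_sub, hι_add, add_neg_cancel, hι_zero,
      leadingCoeff_fixed_of_mul_taylor_eq (hinj 1) hBpos hpos] at h2
    have hsum : ((Bpos.natDegree + Bneg.natDegree : ℕ) : R) * Q.leadingCoeff = 0 := by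
      push_cast
      linear_combination h1 + h2
    have hpos0 : Bpos.natDegree = 0 := by
      have := (mul_eq_zero.mp hsum).resolve_right hq
      norm_cast at this
      omega
    rw [hpos0, Nat.cast_zero, zero_mul, zero_mul] at h1
    exact sub_eq_zero.mp h1.symm
  have hfix_neg_one : ι (-1) c = c := by
    conv_lhs => rw [← hfix_one, hι_add, neg_add_cancel, hι_zero]
  have hfix (a : ℤ) : ι a c = c := by
    induction a using Int.induction_on with
    | zero => exact hι_zero c
    | succ a ih => rw [add_comm, ← hι_add, ih, hfix_one]
    | pred a ih => rw [sub_eq_add_neg, add_comm, ← hι_add, ih, hfix_neg_one]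
  rcases eq_or_ne B 0 with rfl | hB0
  · exact natDegree_zero
  have hk := natDegree_mul_leadingCoeff_of_mul_taylor_eq (hinj k) hB0 hB
  rw [hfix, sub_self, mul_one] at hk
  exact_mod_cast (mul_eq_zero.mp hk).resolve_right hq

end Polynomial

namespace MvPolynomial

variable {σ R : Type*} [CommRing R]

noncomputable def shift (m : σ → ℤ) : MvPolynomial σ R →ₐ[R] MvPolynomial σ R :=
  aeval fun c => X c - C (m c : R)

@[simp]
theorem shift_X (m : σ → ℤ) (c : σ) : shift m (X c : MvPolynomial σ R) = X c - C (m c : R) :=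
  aeval_X _ _

@[simp]
theorem shift_C (m : σ → ℤ) (a : R) : shift m (C a : MvPolynomial σ R) = C a :=
  aeval_C _ _

theorem shift_shift (m m' : σ → ℤ) (p : MvPolynomial σ R) :
    shift m (shift m' p) = shift (m + m') p := by
  change (shift m).comp (shift m') p = _
  congr 1
  refine algHom_ext fun c => ?_
  simp only [AlgHom.comp_apply, shift_X, map_sub, shift_C, Pi.add_apply, Int.cast_add, C_add]
  ring

theorem shift_zero (p : MvPolynomial σ R) : shift 0 p = p := by
  change shift 0 p = AlgHom.id R _ p
  congr 1
  refine algHom_ext fun c => ?_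
  simp

theorem map_eq_mul_shift (φ : MvPolynomial σ R →ₗ[R] MvPolynomial σ R) (m : σ → ℤ)
    (hφ : ∀ c f, φ (X c * f) = (X c - C (m c : R)) * φ f) (f : MvPolynomial σ R) :
    φ f = φ 1 * shift m f := by
  induction f using MvPolynomial.induction_on with
  | C a => rw [shift_C, mul_comm, ← smul_eq_C_mul, ← map_smul, smul_eq_C_mul, mul_one]
  | add p q hp hq => rw [map_add, map_add, hp, hq, mul_add]
  | mul_X p c hp => rw [mul_comm, hφ, hp, map_mul, shift_X]; ring

theorem exists_eq_aeval_X_of_degreeOf_eq_zero {p : MvPolynomial σ R} {i : σ}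
    (h : ∀ j, j ≠ i → degreeOf j p = 0) : ∃ g : Polynomial R, p = Polynomial.aeval (X i) g := by
  have hp : p ∈ supported R {i} := mem_supported.mpr fun j hj =>
    by_contra fun hji => mem_vars_iff_degreeOf_ne_zero.mp (Finset.mem_coe.mp hj) (h j hji)
  rw [supported_eq_adjoin_X, Set.image_singleton, Algebra.adjoin_singleton_eq_range_aeval] at hp
  obtain ⟨g, hg⟩ := hp
  exact ⟨g, hg.symm⟩

section IsolateVar

variable [DecidableEq σ] (j : σ)

noncomputable def isolateVar : MvPolynomial σ R ≃ₐ[R] Polynomial (MvPolynomial {b // b ≠ j} R) :=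
  (renameEquiv R (Equiv.optionSubtypeNe j).symm).trans (optionEquivLeft R _)

theorem natDegree_isolateVar (p : MvPolynomial σ R) :
    (isolateVar j p).natDegree = degreeOf j p :=
  (degreeOf_eq_natDegree j p).symm

@[simp]
theorem isolateVar_X_self : isolateVar j (X j : MvPolynomial σ R) = Polynomial.X := by
  simp [isolateVar, optionEquivLeft_X_none]

@[simp]
theorem isolateVar_C (a : R) : isolateVar j (C a : MvPolynomial σ R) = Polynomial.C (C a) := by
  simp [isolateVar, optionEquivLeft_C]

@[simp]
theorem isolateVar_X_of_ne {l : σ} (hl : l ≠ j) :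
    isolateVar j (X l : MvPolynomial σ R) = Polynomial.C (X ⟨l, hl⟩) := by
  simp [isolateVar, Equiv.optionSubtypeNe_symm_of_ne hl, optionEquivLeft_X_some]

theorem isolateVar_shift_single_self (c : ℤ) (p : MvPolynomial σ R) :
    isolateVar j (shift (Pi.single j c) p) = Polynomial.taylor (-C (c : R)) (isolateVar j p) := by
  change ((isolateVar j).toAlgHom.comp (shift (Pi.single j c))) p =
    (((Polynomial.taylorAlgHom _).restrictScalars R).comp (isolateVar j).toAlgHom) p
  congr 1
  refine algHom_ext fun l => ?_
  rcases eq_or_ne l j with rfl | hl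
  · simp [sub_eq_add_neg]
  · simp [hl]

theorem isolateVar_shift_single_of_ne {i : σ} (hij : i ≠ j) (k : ℤ) (p : MvPolynomial σ R) :
    isolateVar j (shift (Pi.single i k) p) =
      (isolateVar j p).map (shift (Pi.single ⟨i, hij⟩ k)).toRingHom := by
  change ((isolateVar j).toAlgHom.comp (shift (Pi.single i k))) p =
    ((Polynomial.mapAlgHom (shift (Pi.single ⟨i, hij⟩ k))).restrictScalars R |>.comp
      (isolateVar j).toAlgHom) p
  congr 1
  refine algHom_ext fun l => ?_
  rcases eq_or_ne l j with rfl | hl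
  · simp [hij.symm]
  · simp [hl, Pi.single_apply, Subtype.ext_iff]

end IsolateVar

end MvPolynomial

theorem admissible_single {n : ℕ} (i : Fin n) {k : ℤ} (hk : -1 ≤ k) :
    Admissible i (Pi.single i k) :=
  ⟨by simpa using hk, fun j hj => by simp [Pi.single_eq_of_ne hj]⟩

/-- `T a m` is the action of `t^m ∂_a` on `M = K[∂_1, …, ∂_n]`, the generator `v` being `1`. -/
structure IsWnPlusAction {K : Type*} [Field K] {n : ℕ}
    (T : Fin n → (Fin n → ℤ) → (MvPolynomial (Fin n) K →ₗ[K] MvPolynomial (Fin n) K)) : Prop where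
  apply_zero : ∀ (j : Fin n) (f : MvPolynomial (Fin n) K), T j 0 f = X j * f
  bracket : ∀ (i j : Fin n) (r s : Fin n → ℤ), Admissible i r → Admissible j s →
    ∀ f : MvPolynomial (Fin n) K,
      T i r (T j s f) - T j s (T i r f) = (s i : K) • T j (r + s) f - (r j : K) • T i (r + s) f

namespace IsWnPlusAction

variable {K : Type*} [Field K] {n : ℕ}
  {T : Fin n → (Fin n → ℤ) → (MvPolynomial (Fin n) K →ₗ[K] MvPolynomial (Fin n) K)}

theorem apply_eq_mul_shift (hT : IsWnPlusAction T) {a : Fin n} {m : Fin n → ℤ}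
    (ha : Admissible a m) (f : MvPolynomial (Fin n) K) : T a m f = T a m 1 * shift m f := by
  refine map_eq_mul_shift (T a m) m (fun c g => ?_) f
  have h := hT.bracket c a 0 m (by simpa using admissible_single c (k := 0) (by norm_num)) ha g
  simp only [hT.apply_zero, zero_add, Pi.zero_apply, Int.cast_zero, zero_smul, sub_zero,
    smul_eq_C_mul] at h
  linear_combination -h

theorem bracket_one (hT : IsWnPlusAction T) {a b : Fin n} {r s : Fin n → ℤ}
    (ha : Admissible a r) (hb : Admissible b s) :
    T a r 1 * shift r (T b s 1) - T b s 1 * shift s (T a r 1) =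
      (s a : K) • T b (r + s) 1 - (r b : K) • T a (r + s) 1 := by
  rw [← hT.apply_eq_mul_shift ha, ← hT.apply_eq_mul_shift hb, hT.bracket a b r s ha hb]

theorem commute_single_neg_one (hT : IsWnPlusAction T) {i j : Fin n} (hij : i ≠ j) {k : ℤ}
    (hk : -1 ≤ k) :
    T j (Pi.single j (-1)) 1 * shift (Pi.single j (-1)) (T i (Pi.single i k) 1) =
      T i (Pi.single i k) 1 * shift (Pi.single i k) (T j (Pi.single j (-1)) 1) := by
  have h := hT.bracket_one (admissible_single j (k := -1) le_rfl) (admissible_single i hk)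
  rw [Pi.single_eq_of_ne hij.symm, Pi.single_eq_of_ne hij] at h
  simpa [sub_eq_zero] using h

theorem single_ne_zero [CharZero K] (hT : IsWnPlusAction T) (j : Fin n) :
    T j (Pi.single j (-1)) 1 ≠ 0 ∧ T j (Pi.single j 1) 1 ≠ 0 := by
  have h := hT.bracket_one (admissible_single j (k := -1) le_rfl)
    (admissible_single j (k := 1) (by norm_num))
  rw [← Pi.single_add, neg_add_cancel, Pi.single_zero, hT.apply_zero] at h
  have hX : (X j : MvPolynomial (Fin n) K) + X j ≠ 0 := by
    rw [← two_mul]; exact mul_ne_zero two_ne_zero (X_ne_zero j)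
  simp only [Pi.single_eq_same, mul_one, Int.cast_one, Int.cast_neg, one_smul, neg_smul,
    sub_neg_eq_add] at h
  constructor <;> rintro h0 <;> simp [h0, hX.symm] at h
theorem commute_single_neg_one_isolateVar [CharZero K] (hT : IsWnPlusAction T) {i j : Fin n}
    (hij : i ≠ j) {k : ℤ} (hk : -1 ≤ k) :
    isolateVar j (T j (Pi.single j (-1)) 1) *
        Polynomial.taylor 1 (isolateVar j (T i (Pi.single i k) 1)) =
      isolateVar j (T i (Pi.single i k) 1) *
        (isolateVar j (T j (Pi.single j (-1)) 1)).map (shift (Pi.single ⟨i, hij⟩ k)).toRingHom := by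
  have h := congrArg (isolateVar j) (hT.commute_single_neg_one hij hk)
  rw [map_mul, map_mul, isolateVar_shift_single_self, isolateVar_shift_single_of_ne _ hij] at h
  simpa using h

end IsWnPlusAction

theorem diagonal_action_in_single_variable_general {n : ℕ}
    (T : Fin n → (Fin n → ℤ) → (MvPolynomial (Fin n) ℂ →ₗ[ℂ] MvPolynomial (Fin n) ℂ))
    (h0 : ∀ (j : Fin n) (f : MvPolynomial (Fin n) ℂ), T j 0 f = X j * f)
    (hbr : ∀ (i j : Fin n) (r s : Fin n → ℤ), Admissible i r → Admissible j s →
      ∀ f : MvPolynomial (Fin n) ℂ,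
        T i r (T j s f) - T j s (T i r f)
          = (s i : ℂ) • T j (r + s) f - (r j : ℂ) • T i (r + s) f) :
    ∀ (i : Fin n) (ki : ℤ), -1 ≤ ki →
      ∃ g : Polynomial ℂ,
        T i (Pi.single i ki) (1 : MvPolynomial (Fin n) ℂ) = Polynomial.aeval (X i) g := by
  intro i ki hki
  have hT : IsWnPlusAction T := ⟨h0, hbr⟩
  refine exists_eq_aeval_X_of_degreeOf_eq_zero fun j hji => ?_
  have hij := hji.symm
  have hne {p : MvPolynomial (Fin n) ℂ} (hp : p ≠ 0) : isolateVar j p ≠ 0 :=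
    (map_ne_zero_iff _ (isolateVar j).injective).mpr hp
  rw [← natDegree_isolateVar]
  exact Polynomial.natDegree_eq_zero_of_mul_taylor_one_eq
    (fun k => (shift (Pi.single (⟨i, hij⟩ : {b // b ≠ j}) k)).toRingHom)
    (fun a b x => by simp [shift_shift, Pi.single_add]) (fun x => by simp [shift_zero])
    (hne (hT.single_ne_zero j).1) (hne (hT.single_ne_zero i).2) (hne (hT.single_ne_zero i).1)
    (hT.commute_single_neg_one_isolateVar hij (by norm_num))
    (hT.commute_single_neg_one_isolateVar hij le_rfl) (hT.commute_single_neg_one_isolateVar hij hki)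

/-- Lemma 4: for a `W_n^+`-module `M = U(h_n)v ≅ ℂ[∂_1,...,∂_n]`
(`1 < n < ∞`) free of rank 1 over `U(h_n)` with `h_n` acting by multiplication,
`t_i^{k_i} ∂_i · v` lies in `ℂ[∂_i] v` for every `k_i ≥ -1`.  Here `T i k` is the
action of `t^k ∂_i` and `v = 1`. -/
theorem diagonal_action_in_single_variable {n : ℕ} (hn : 1 < n)
    (T : Fin n → (Fin n → ℤ) → (MvPolynomial (Fin n) ℂ →ₗ[ℂ] MvPolynomial (Fin n) ℂ))
    (h0 : ∀ (j : Fin n) (f : MvPolynomial (Fin n) ℂ), T j 0 f = X j * f)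
    (hbr : ∀ (i j : Fin n) (r s : Fin n → ℤ), Admissible i r → Admissible j s →
      ∀ f : MvPolynomial (Fin n) ℂ,
        T i r (T j s f) - T j s (T i r f)
          = (s i : ℂ) • T j (r + s) f - (r j : ℂ) • T i (r + s) f) :
    ∀ (i : Fin n) (ki : ℤ), -1 ≤ ki →
      ∃ g : Polynomial ℂ,
        T i (Pi.single i ki) (1 : MvPolynomial (Fin n) ℂ) = Polynomial.aeval (X i) g :=
  diagonal_action_in_single_variable_general T h0 hbr
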